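/- Let f : ℝⁿ → ℝ be twice continuously differentiable, let x̂ satisfy ∇f(x̂) = 0, and suppose λ_min(∇²f(x + t(x̂ − x) + x − x)) ≥ −α/2 for all t ∈ [0,1] along the segment from x̂ to x (i.e., the Hessian has smallest eigenvalue at least −α/2 on the segment). If additionally f(x) ≥ f(x̂) + (α/2)‖x − x̂‖², then ⟨∇f(x), x − x̂⟩ ≥ (α/4)‖x − x̂‖², and consequently ‖x − x̂‖ ≤ (4/α)‖∇f(x)‖. -/

import Mathlib

/-!
Along the segment `t ↦ x̂ + t (x - x̂)` the second derivative of `φ t = f (x̂ + t (x - x̂))` is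
at least `-(α/2)‖x - x̂‖²`, so `φ` lies above its tangent line at `t = 1` up to a quadratic
error: `f x - f x̂ ≤ ⟪∇f x, x - x̂⟫ + (α/4)‖x - x̂‖²`. Combined with quadratic growth this gives
`⟪∇f x, x - x̂⟫ ≥ (α/4)‖x - x̂‖²`, and Cauchy–Schwarz turns that into the distance bound.
-/

open RealInnerProductSpace
open Set

theorem image_sub_le_of_neg_le_second_deriv {φ φ' φ'' : ℝ → ℝ} {a b c : ℝ} (hab : a ≤ b)
    (hφ : ∀ t ∈ Icc a b, HasDerivAt φ (φ' t) t) (hφ' : ∀ t ∈ Icc a b, HasDerivAt φ' (φ'' t) t)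
    (hφ'' : ∀ t ∈ Icc a b, -c ≤ φ'' t) :
    φ b - φ a ≤ φ' b * (b - a) + c / 2 * (b - a) ^ 2 := by
  -- `φ' + c • id` is monotone, so `φ' t ≤ φ' b + c (b - t)`; integrating this from `a` to `b`
  -- is the antitonicity of the auxiliary function below.
  have hmono : MonotoneOn (fun t => φ' t + c * t) (Icc a b) := by
    refine monotoneOn_of_hasDerivWithinAt_nonneg (f' := fun t => φ'' t + c) (convex_Icc a b)
      (fun t ht => ((hφ' t ht).continuousAt.add (continuous_const_mul c).continuousAt)
        |>.continuousWithinAt) (fun t ht => ?_) (fun t ht => ?_)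
    · exact ((hφ' t (interior_subset ht)).fun_add (hasDerivAt_const_mul c)).hasDerivWithinAt
    · linarith [hφ'' t (interior_subset ht)]
  have hanti : AntitoneOn (fun t => φ t - φ' b * t - c * (b * t - t ^ 2 / 2)) (Icc a b) := by
    have hderiv : ∀ t ∈ Icc a b, HasDerivAt (fun t => φ t - φ' b * t - c * (b * t - t ^ 2 / 2))
        (φ' t - φ' b - c * (b - t)) t := fun t ht => by
      refine (((hφ t ht).fun_sub (hasDerivAt_const_mul (φ' b))).fun_sub
        (((hasDerivAt_const_mul b).fun_sub ((hasDerivAt_pow 2 t).div_const 2)).const_mul c))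
        |>.congr_deriv ?_
      norm_num
    refine antitoneOn_of_hasDerivWithinAt_nonpos (convex_Icc a b)
      (fun t ht => (hderiv t ht).continuousAt.continuousWithinAt)
      (fun t ht => (hderiv t (interior_subset ht)).hasDerivWithinAt) (fun t ht => ?_)
    have := hmono (interior_subset ht) (right_mem_Icc.mpr hab) (interior_subset ht).2
    simp only at this
    linarith
  have := hanti (left_mem_Icc.mpr hab) (right_mem_Icc.mpr hab) hab
  linear_combination this

theorem hasDerivAt_comp_add_smul {E F : Type*} [NormedAddCommGroup E] [NormedSpace ℝ E]
    [NormedAddCommGroup F] [NormedSpace ℝ F] {g : E → F} {a v : E} {t : ℝ}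
    (hg : DifferentiableAt ℝ g (a + t • v)) :
    HasDerivAt (fun s : ℝ => g (a + s • v)) (fderiv ℝ g (a + t • v) v) t :=
  hg.hasFDerivAt.comp_hasDerivAt t (((hasDerivAt_id t).smul_const v).const_add a |>.congr_deriv
    (one_smul ℝ v))

section InnerProductSpace

variable {E : Type*} [NormedAddCommGroup E] [InnerProductSpace ℝ E]

theorem ContDiff.gradient [CompleteSpace E] {f : E → ℝ} {m n : WithTop ℕ∞} (hf : ContDiff ℝ n f)
    (hmn : m + 1 ≤ n) :
    ContDiff ℝ m (gradient f) :=
  (InnerProductSpace.toDual ℝ E).symm.toContinuousLinearEquiv.contDiff.comp (hf.fderiv_right hmn)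

theorem sub_le_inner_gradient_add_of_hessian_ge [CompleteSpace E] {f : E → ℝ} {x y : E} {c : ℝ}
    (hf : ContDiff ℝ 2 f)
    (hHess : ∀ z ∈ segment ℝ y x, ∀ v, -c * ‖v‖ ^ 2 ≤ ⟪v, (fderiv ℝ (gradient f) z) v⟫) :
    f x - f y ≤ ⟪gradient f x, x - y⟫ + c / 2 * ‖x - y‖ ^ 2 := by
  set v := x - y
  have hfd : Differentiable ℝ f := hf.differentiable two_ne_zero
  have hgd : Differentiable ℝ (gradient f) :=
    (hf.gradient (m := 1) le_rfl).differentiable one_ne_zero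
  have hφ : ∀ t : ℝ, HasDerivAt (fun s : ℝ => f (y + s • v)) ⟪gradient f (y + t • v), v⟫ t :=
    fun t => by rw [inner_gradient_left]; exact hasDerivAt_comp_add_smul (hfd _)
  have hφ' : ∀ t : ℝ, HasDerivAt (fun s : ℝ => ⟪gradient f (y + s • v), v⟫)
      ⟪v, fderiv ℝ (gradient f) (y + t • v) v⟫ t := fun t => by
    simpa [real_inner_comm] using (hasDerivAt_comp_add_smul (hgd _)).inner ℝ (hasDerivAt_const t v)
  have key := image_sub_le_of_neg_le_second_deriv zero_le_one (fun t _ => hφ t)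
    (fun t _ => hφ' t) (c := c * ‖v‖ ^ 2) fun t ht => by
      simpa [neg_mul] using hHess _ (segment_eq_image' ℝ y x ▸ mem_image_of_mem _ ht) v
  have h1 : y + (1 : ℝ) • v = x := by simp [v]
  have h0 : y + (0 : ℝ) • v = y := by simp
  simp only [h1, h0, sub_zero, one_pow, mul_one] at key
  linarith

theorem mul_norm_le_norm_of_mul_sq_le_inner {u v : E} {μ : ℝ} (h : μ * ‖v‖ ^ 2 ≤ ⟪u, v⟫) :
    μ * ‖v‖ ≤ ‖u‖ := by
  rcases (norm_nonneg v).eq_or_lt with hv | hv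
  · simp [← hv]
  · have : μ * ‖v‖ * ‖v‖ ≤ ‖u‖ * ‖v‖ := by nlinarith [real_inner_le_norm u v]
    exact le_of_mul_le_mul_right this hv

end InnerProductSpace

theorem stmt5_general {n : ℕ} (f : EuclideanSpace ℝ (Fin n) → ℝ) (α : ℝ)
    (x xhat : EuclideanSpace ℝ (Fin n))
    (hα : 0 < α) (hf : ContDiff ℝ 2 f)
    (hHess : ∀ z ∈ segment ℝ xhat x, ∀ v,
      -(α / 2) * ‖v‖ ^ 2 ≤ ⟪v, (fderiv ℝ (gradient f) z) v⟫)
    (hgrowth : f xhat + α / 2 * ‖x - xhat‖ ^ 2 ≤ f x) :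
    α / 4 * ‖x - xhat‖ ^ 2 ≤ ⟪gradient f x, x - xhat⟫ ∧
      ‖x - xhat‖ ≤ 4 / α * ‖gradient f x‖ := by
  have hinner : α / 4 * ‖x - xhat‖ ^ 2 ≤ ⟪gradient f x, x - xhat⟫ := by
    have := sub_le_inner_gradient_add_of_hessian_ge hf hHess
    linarith
  refine ⟨hinner, ?_⟩
  have := mul_norm_le_norm_of_mul_sq_le_inner hinner
  rw [div_mul_eq_mul_div, le_div_iff₀ hα]
  linarith

theorem stmt5 {n : ℕ} (f : EuclideanSpace ℝ (Fin n) → ℝ) (α : ℝ)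
    (x xhat : EuclideanSpace ℝ (Fin n))
    (hα : 0 < α) (hf : ContDiff ℝ 2 f)
    (hcrit : gradient f xhat = 0)
    (hHess : ∀ z ∈ segment ℝ xhat x, ∀ v,
      -(α / 2) * ‖v‖ ^ 2 ≤ ⟪v, (fderiv ℝ (gradient f) z) v⟫)
    (hgrowth : f xhat + α / 2 * ‖x - xhat‖ ^ 2 ≤ f x) :
    α / 4 * ‖x - xhat‖ ^ 2 ≤ ⟪gradient f x, x - xhat⟫ ∧
      ‖x - xhat‖ ≤ 4 / α * ‖gradient f x‖ :=
  stmt5_general f α x xhat hα hf hHess hgrowth
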